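/- arXiv:1403.0881 — 2 statements merged into one kernel-verified Lean document; each statement's English description precedes it below -/
import Mathlib

section
/- For all integers d ≥ 1, k ≥ 3, n ≥ 0, the inclusion map M_d^{(2)}(n) ↪ M_d^{(k)}(n) of the configuration space of n distinct points in ℝ^d into the no-k-equal space is null-homotopic. -/
/-- The no-`k`-equal space `M_d^{(k)}(n)`: tuples of `n` points of `ℝ^d` such that
no `k` of them are all equal. -/
def noKEqual (d k n : ℕ) : Set (Fin n → EuclideanSpace ℝ (Fin d)) :=
  {x | ∀ I : Finset (Fin n), I.card = k → ∃ i ∈ I, ∃ j ∈ I, x i ≠ x j}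

/-- The no-2-equal condition (pairwise distinct points) implies the
no-`k`-equal condition for `k ≥ 2`. -/
lemma noKEqual_two_subset (d k n : ℕ) (hk : 2 ≤ k) :
    noKEqual d 2 n ⊆ noKEqual d k n := by
  intro x hx I hI
  obtain ⟨t, hts, htc⟩ := I.exists_subset_card_eq (show 2 ≤ I.card by omega)
  obtain ⟨i, hi, j, hj, hij⟩ := hx t htc
  exact ⟨i, hts hi, j, hts hj, hij⟩

/-!
Fix a unit vector `e`. Lift the points of a configuration `x` one at a time along `e`, the
`i`-th one to height `(i + 1) · spread x`, where `spread x` exceeds every distance `‖x i - x j‖`.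
At every moment at most one point is in motion, and the others either sit at their original,
pairwise distinct positions or at pairwise different heights far above them; so only the moving
point can collide with another one, and no three points ever meet. Once all points are lifted,
shrinking `x` linearly to `0` while the heights shrink to `i + 1` keeps the height gaps larger
than the horizontal distances, hence all points distinct, and ends at the fixed configuration
`i ↦ (i + 1) • e`.
-/

open Set Function

theorem ContinuousMap.Homotopic.of_continuous_family {X Y : Type*} [TopologicalSpace X]
    [TopologicalSpace Y] {s : Set X} {t : Set Y} {f g : C(s, t)} (F : ℝ → X → Y)
    (hF : Continuous fun p : ℝ × X => F p.1 p.2) (hmaps : ∀ τ ∈ Icc (0 : ℝ) 1, MapsTo (F τ) s t)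
    (hf : ∀ x, (f x : Y) = F 0 x) (hg : ∀ x, (g x : Y) = F 1 x) : f.Homotopic g :=
  ⟨{ toFun := fun p => ⟨F p.1 p.2, hmaps p.1 p.1.2 p.2.2⟩
     continuous_toFun := by fun_prop
     map_zero_left := fun x => Subtype.ext (hf x).symm
     map_one_left := fun x => Subtype.ext (hg x).symm }⟩

section Lifting

variable {E : Type*} [NormedAddCommGroup E] {n : ℕ}

noncomputable def spread (x : Fin n → E) : ℝ := 1 + ∑ i, ∑ j, ‖x i - x j‖

lemma norm_sub_add_one_le_spread (x : Fin n → E) (i j : Fin n) :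
    ‖x i - x j‖ + 1 ≤ spread x := by
  have hj : ‖x i - x j‖ ≤ ∑ j', ‖x i - x j'‖ :=
    Finset.single_le_sum (f := fun j' => ‖x i - x j'‖) (fun _ _ => norm_nonneg _)
      (Finset.mem_univ j)
  have hi : ∑ j', ‖x i - x j'‖ ≤ ∑ i', ∑ j', ‖x i' - x j'‖ :=
    Finset.single_le_sum (f := fun i' => ∑ j', ‖x i' - x j'‖)
      (fun _ _ => Finset.sum_nonneg fun _ _ => norm_nonneg _) (Finset.mem_univ i)
  rw [spread]
  linarith

lemma continuous_spread : Continuous (spread : (Fin n → E) → ℝ) := by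
  unfold spread
  fun_prop

variable [NormedSpace ℝ E]

lemma injOn_add_intCast_mul_smul {ι : Type*} {e : E} (he : ‖e‖ = 1) {x : ι → E} {c : ι → ℤ}
    {ρ : ℝ} {s : Set ι} (hinj : InjOn (fun i => (x i, c i)) s)
    (hρ : ∀ i ∈ s, ∀ j ∈ s, ‖x i - x j‖ < ρ) :
    InjOn (fun i => x i + ((c i : ℝ) * ρ) • e) s := by
  intro i hi j hj hij
  have hρ0 : 0 < ρ := (norm_nonneg _).trans_lt (hρ i hi i hi)
  have hnorm : ‖x i - x j‖ = |(c j - c i : ℝ)| * ρ := by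
    have : x i - x j = ((c j - c i : ℝ) * ρ) • e := by
      simp only at hij
      rw [sub_mul, sub_smul]
      linear_combination (norm := module) hij
    rw [this, norm_smul, he, mul_one, Real.norm_eq_abs, abs_mul, abs_of_pos hρ0]
  obtain hc | hc := eq_or_ne (c i) (c j)
  · rw [hc, sub_self, abs_zero, zero_mul, norm_sub_eq_zero_iff] at hnorm
    exact hinj hi hj (Prod.ext hnorm hc)
  · have : (1 : ℝ) ≤ |(c j - c i : ℝ)| := by
      exact_mod_cast Int.one_le_abs (sub_ne_zero.2 hc.symm)
    nlinarith [hρ i hi j hj]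

noncomputable def liftOneByOne (e : E) (t : ℝ) (x : Fin n → E) : Fin n → E :=
  fun i => x i + (((i : ℕ) + 1 : ℝ) * projIcc 0 1 zero_le_one (n * t - i) * spread x) • e

noncomputable def contractLifted (e : E) (t : ℝ) (x : Fin n → E) : Fin n → E :=
  fun i => (1 - t) • x i + (((i : ℕ) + 1 : ℝ) * ((1 - t) * spread x + t)) • e

lemma liftOneByOne_zero (e : E) (x : Fin n → E) : liftOneByOne e 0 x = x := by
  funext i
  have hi : (n : ℝ) * 0 - i ≤ 0 := by rw [mul_zero, zero_sub, neg_nonpos]; positivity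
  rw [liftOneByOne, projIcc_of_le_left zero_le_one hi]
  simp

lemma liftOneByOne_one (e : E) (x : Fin n → E) : liftOneByOne e 1 x = contractLifted e 0 x := by
  funext i
  have hi : 1 ≤ (n : ℝ) * 1 - i := by
    rw [mul_one, le_sub_iff_add_le']
    exact_mod_cast i.isLt
  rw [liftOneByOne, contractLifted, projIcc_of_right_le zero_le_one hi]
  simp

lemma contractLifted_one (e : E) (x : Fin n → E) :
    contractLifted e 1 x = fun i : Fin n => ((i : ℕ) + 1 : ℝ) • e := by
  funext i
  simp [contractLifted]

lemma continuous_liftOneByOne (e : E) :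
    Continuous fun p : ℝ × (Fin n → E) => liftOneByOne e p.1 p.2 := by
  refine continuous_pi fun i => ?_
  have := continuous_spread (E := E) (n := n)
  have := continuous_projIcc (a := (0 : ℝ)) (b := 1) (h := zero_le_one)
  unfold liftOneByOne
  fun_prop

lemma continuous_contractLifted (e : E) :
    Continuous fun p : ℝ × (Fin n → E) => contractLifted e p.1 p.2 := by
  refine continuous_pi fun i => ?_
  have := continuous_spread (E := E) (n := n)
  unfold contractLifted
  fun_prop

end Lifting

section NoKEqual

variable {d k n : ℕ} {x : Fin n → EuclideanSpace ℝ (Fin d)}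

lemma injective_of_mem_noKEqual_two (hx : x ∈ noKEqual d 2 n) : Injective x := by
  intro i j hij
  by_contra hne
  obtain ⟨a, ha, b, hb, hab⟩ := hx {i, j} (Finset.card_pair hne)
  simp only [Finset.mem_insert, Finset.mem_singleton] at ha hb
  rcases ha with rfl | rfl <;> rcases hb with rfl | rfl <;> simp_all

lemma mem_noKEqual_of_injOn (hk : 3 ≤ k) {s : Set (Fin n)} (hs : sᶜ.Subsingleton)
    (hx : InjOn x s) : x ∈ noKEqual d k n := by
  classical
  intro I hI
  have hbad : (I.filter (· ∉ s)).card ≤ 1 :=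
    Finset.card_le_one.2 fun a ha b hb =>
      hs (Finset.mem_filter.1 ha).2 (Finset.mem_filter.1 hb).2
  have hgood : 1 < (I.filter (· ∈ s)).card := by
    have := Finset.card_filter_add_card_filter_not (s := I) (p := (· ∈ s))
    omega
  obtain ⟨a, ha, b, hb, hab⟩ := Finset.one_lt_card.1 hgood
  rw [Finset.mem_filter] at ha hb
  exact ⟨a, ha.1, b, hb.1, hx.ne ha.2 hb.2 hab⟩

variable {e : EuclideanSpace ℝ (Fin d)}

lemma liftOneByOne_mem_noKEqual (he : ‖e‖ = 1) (hk : 3 ≤ k) (hx : x ∈ noKEqual d 2 n)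
    (t : ℝ) : liftOneByOne e t x ∈ noKEqual d k n := by
  classical
  set s : Set (Fin n) := {i | (n * t - i : ℝ) ∉ Ioo 0 1}
  let c : Fin n → ℤ := fun i => if n * t ≤ i then 0 else i + 1
  refine mem_noKEqual_of_injOn hk (s := s) ?_ ?_
  · intro i hi j hj
    simp only [s, mem_compl_iff, mem_ofPred_eq, not_not, mem_Ioo] at hi hj
    have hij : (i : ℕ) < j + 1 := by exact_mod_cast (by linarith : (i : ℝ) < j + 1)
    have hji : (j : ℕ) < i + 1 := by exact_mod_cast (by linarith : (j : ℝ) < i + 1)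
    ext
    omega
  · refine (injOn_add_intCast_mul_smul he (c := c) (ρ := spread x)
      (fun i _ j _ h => injective_of_mem_noKEqual_two hx (congrArg Prod.fst h))
      (fun i _ j _ => (lt_add_one _).trans_le (norm_sub_add_one_le_spread x i j))).congr ?_
    intro i hi
    simp only [s, mem_ofPred_eq, mem_Ioo, not_and_or, not_lt] at hi
    simp only [liftOneByOne, c]
    rcases hi with h | h
    · rw [if_pos (by linarith), projIcc_of_le_left zero_le_one h]
      simp
    · rw [if_neg (by linarith), projIcc_of_right_le zero_le_one h]
      simp

lemma contractLifted_mem_noKEqual (he : ‖e‖ = 1) (hk : 3 ≤ k) {t : ℝ} (ht : t ≤ 1) :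
    contractLifted e t x ∈ noKEqual d k n := by
  refine mem_noKEqual_of_injOn hk (s := univ) (by simp) ?_
  refine (injOn_add_intCast_mul_smul he (x := fun i => (1 - t) • x i) (c := fun i => i + 1)
      (ρ := (1 - t) * spread x + t) (fun i _ j _ h => ?_) (fun i _ j _ => ?_)).congr ?_
  · ext
    simpa using congrArg Prod.snd h
  · have := mul_le_mul_of_nonneg_left (norm_sub_add_one_le_spread x i j) (sub_nonneg.2 ht)
    rw [← smul_sub, norm_smul, Real.norm_of_nonneg (sub_nonneg.2 ht)]
    linarith
  · intro i _
    simp [contractLifted]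

end NoKEqual

/-- The inclusion of the configuration space `M_d^{(2)}(n)` of `n` distinct points
into the no-`k`-equal space `M_d^{(k)}(n)` is null-homotopic for `k ≥ 3`. -/
theorem inclusion_config_noKEqual_nullhomotopic (d k n : ℕ) (hd : 1 ≤ d) (hk : 3 ≤ k) :
    (ContinuousMap.mk (Set.inclusion (noKEqual_two_subset d k n (by omega)))
      (continuous_inclusion _)).Nullhomotopic := by
  obtain ⟨e, he⟩ : ∃ e : EuclideanSpace ℝ (Fin d), ‖e‖ = 1 :=
    ⟨EuclideanSpace.single ⟨0, hd⟩ 1, by simp⟩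
  let lifted : C(noKEqual d 2 n, noKEqual d k n) :=
    ⟨fun x => ⟨liftOneByOne e 1 x, liftOneByOne_mem_noKEqual he hk x.2 1⟩,
      ((continuous_liftOneByOne e).comp
        (continuous_const.prodMk continuous_subtype_val)).subtype_mk _⟩
  refine ⟨⟨fun i : Fin n => ((i : ℕ) + 1 : ℝ) • e, ?_⟩, ?_⟩
  · exact contractLifted_one e 0 ▸ contractLifted_mem_noKEqual he hk le_rfl
  · refine (ContinuousMap.Homotopic.of_continuous_family (g := lifted) (liftOneByOne e)
      (continuous_liftOneByOne e) (fun τ _ x hx => liftOneByOne_mem_noKEqual he hk hx τ)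
      (fun x => (liftOneByOne_zero e x.1).symm) fun x => rfl).trans ?_
    exact ContinuousMap.Homotopic.of_continuous_family (contractLifted e)
      (continuous_contractLifted e)
      (fun τ hτ x _ => contractLifted_mem_noKEqual he hk hτ.2)
      (fun x => liftOneByOne_one e x.1) fun x => (contractLifted_one e x.1).symm
end

section
/- Let n ≥ k ≥ 2 be integers. In the group algebra ℚ[Σ_n], with a = Σ_σ sgn(σ)·σ summed over permutations fixing each of k+1, …, n, and b = Σ_τ τ summed over permutations fixing each of 2, …, k, the left ideal ℚ[Σ_n]·(a·b) is a simple (irreducible) module over ℚ[Σ_n]; it is the irreducible representation of Σ_n of hook type. -/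
/-- The antisymmetrizer `a = Σ_σ sgn(σ)·σ` over permutations of `{1,…,n}` fixing each of
`k+1,…,n` (in zero-based indexing: fixing every index `≥ k`). -/
noncomputable def hookA (n k : ℕ) : MonoidAlgebra ℚ (Equiv.Perm (Fin n)) :=
  ∑ σ ∈ Finset.univ.filter (fun σ : Equiv.Perm (Fin n) => ∀ i : Fin n, k ≤ (i : ℕ) → σ i = i),
    MonoidAlgebra.single σ ((Equiv.Perm.sign σ : ℤ) : ℚ)

/-- The symmetrizer `b = Σ_τ τ` over permutations of `{1,…,n}` fixing each of `2,…,k`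
(in zero-based indexing: fixing every index `i` with `1 ≤ i < k`). -/
noncomputable def hookB (n k : ℕ) : MonoidAlgebra ℚ (Equiv.Perm (Fin n)) :=
  ∑ τ ∈ Finset.univ.filter
      (fun τ : Equiv.Perm (Fin n) => ∀ i : Fin n, 1 ≤ (i : ℕ) → (i : ℕ) < k → τ i = i),
    MonoidAlgebra.single τ (1 : ℚ)

/-!
Write `a = Σ_{σ ∈ P} sgn σ • σ` and `b = Σ_{τ ∈ Q} τ`, where `P` consists of the permutations
supported in a finite set `S` and `Q` of those fixing `T = S \ {z}` pointwise
(here `S = {1, …, k}` and `z = 1`). For every permutation `g`, `a g b` is a multiple of `a b`: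
if `g` maps `T` into `S` then `g = p q` with `p ∈ P`, `q ∈ Q`, and `a g b = sgn p • a b`;
otherwise `g` sends two points `u ≠ v` outside `T` into `S`, and the transpositions
`(g u, g v) ∈ P`, `(u, v) ∈ Q` give `a g b = -(a g b)`. So `c = a b` satisfies `c A c ⊆ K c`
in the group algebra `A`, and `c ≠ 0` since `P ∩ Q = 1` makes its coefficient at the identity `1`.
In a semisimple ring (Maschke) such a `c` generates a simple left ideal: a nonzero left ideal
inside `A c` is `A e` with `e = x c` idempotent, and `c x c = μ c` with `μ ≠ 0` because `e ≠ 0`,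
whence `c ∈ A e`.
-/

open Finset MonoidAlgebra Equiv Equiv.Perm

section Symmetrizers

variable (K : Type*) [CommRing K] {G : Type*} [Group G] [Fintype G]
  (H : Subgroup G) [DecidablePred (· ∈ H)]

noncomputable def symmetrizer : MonoidAlgebra K G :=
  ∑ g ∈ univ.filter (· ∈ H), single g 1

variable {K H}

theorem sum_filter_mem_mul_right {M : Type*} [AddCommMonoid M] {h : G} (hh : h ∈ H)
    (f : G → M) : ∑ g ∈ univ.filter (· ∈ H), f (g * h) = ∑ g ∈ univ.filter (· ∈ H), f g :=
  Finset.sum_equiv (Equiv.mulRight h) (by simp [H.mul_mem_cancel_right hh]) (fun _ _ => rfl)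

theorem sum_filter_mem_mul_left {M : Type*} [AddCommMonoid M] {h : G} (hh : h ∈ H)
    (f : G → M) : ∑ g ∈ univ.filter (· ∈ H), f (h * g) = ∑ g ∈ univ.filter (· ∈ H), f g :=
  Finset.sum_equiv (Equiv.mulLeft h) (by simp [H.mul_mem_cancel_left hh]) (fun _ _ => rfl)

theorem of_mul_symmetrizer {h : G} (hh : h ∈ H) :
    of K G h * symmetrizer K H = symmetrizer K H := by
  simp only [symmetrizer, of_apply, Finset.mul_sum, single_mul_single, mul_one]
  exact sum_filter_mem_mul_left hh (fun g => single g (1 : K))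

end Symmetrizers

section Antisymmetrizers

variable (K : Type*) [CommRing K] {α : Type*} [Fintype α] [DecidableEq α]
  (H : Subgroup (Perm α)) [DecidablePred (· ∈ H)]

noncomputable def antisymmetrizer : MonoidAlgebra K (Perm α) :=
  ∑ σ ∈ univ.filter (· ∈ H), single σ (sign σ : K)

variable {K H}

theorem antisymmetrizer_mul_of {p : Perm α} (hp : p ∈ H) :
    antisymmetrizer K H * of K (Perm α) p = (sign p : K) • antisymmetrizer K H := by
  simp only [antisymmetrizer, of_apply, Finset.sum_mul, Finset.smul_sum, single_mul_single,
    mul_one, smul_single']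
  rw [← sum_filter_mem_mul_right hp (fun σ => single σ ((sign p : K) * sign σ))]
  refine Finset.sum_congr rfl fun σ _ => ?_
  rw [Perm.sign_mul, mul_comm (sign σ), Units.val_mul, Int.cast_mul, ← mul_assoc, ← Int.cast_mul,
    ← Units.val_mul, Int.units_mul_self, Units.val_one, Int.cast_one, one_mul]

theorem coeff_antisymmetrizer_mul_symmetrizer_one {P Q : Subgroup (Perm α)}
    [DecidablePred (· ∈ P)] [DecidablePred (· ∈ Q)] (hPQ : P ⊓ Q = ⊥) :
    (antisymmetrizer K P * symmetrizer K Q).coeff 1 = 1 := by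
  simp only [antisymmetrizer, symmetrizer, Finset.sum_mul, Finset.mul_sum, single_mul_single,
    mul_one, coeff_sum, Finset.sum_apply', coeff_single, Finsupp.single_apply,
    mul_eq_one_iff_inv_eq]
  rw [Finset.sum_comm]
  simp only [Finset.sum_ite_eq]
  rw [Finset.sum_eq_single_of_mem 1 (by simp [P.one_mem])]
  · simp [Q.one_mem]
  · intro σ hσP hσ1
    rw [if_neg]
    intro hσQ
    simp only [mem_filter, mem_univ, true_and, inv_mem_iff] at hσP hσQ
    exact hσ1 (by simpa [hPQ] using Subgroup.mem_inf.mpr ⟨hσP, hσQ⟩)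

end Antisymmetrizers

theorem IsSemisimpleRing.isSimpleModule_span_singleton_of_mul_mul_mem {K A : Type*} [Field K]
    [Ring A] [Algebra K A] [IsSemisimpleRing A] {c : A} (hc : c ≠ 0)
    (hcxc : ∀ x : A, c * x * c ∈ K ∙ c) : IsSimpleModule A (A ∙ c) := by
  rw [isSimpleModule_iff_isAtom]
  refine ⟨by simpa using hc, fun W hW => ?_⟩
  obtain ⟨e, he, rfl⟩ := IsSemisimpleRing.ideal_eq_span_idempotent W
  obtain ⟨x, rfl⟩ :=
    Submodule.mem_span_singleton.mp (hW.le (Submodule.mem_span_singleton_self e))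
  rw [smul_eq_mul] at he hW ⊢
  obtain ⟨μ, hμ⟩ := Submodule.mem_span_singleton.mp (hcxc x)
  rw [Submodule.span_singleton_eq_bot]
  by_cases hμ0 : μ = 0
  · calc x * c = x * c * (x * c) := he.symm
      _ = x * (c * x * c) := by simp only [mul_assoc]
      _ = 0 := by rw [← hμ, hμ0, zero_smul, mul_zero]
  · refine absurd (Submodule.span_le.mpr (Set.singleton_subset_iff.mpr ?_)) hW.not_ge
    have hmem := Ideal.mul_mem_left _ (μ⁻¹ • c) (Ideal.mem_span_singleton_self (x * c))
    rwa [smul_mul_assoc, ← mul_assoc, ← hμ, inv_smul_smul₀ hμ0] at hmem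

section PermCombinatorics

variable {α : Type*} [DecidableEq α]

theorem swap_mem_fixingSubgroup {s : Set α} {x y : α} (hx : x ∉ s) (hy : y ∉ s) :
    swap x y ∈ fixingSubgroup (Perm α) s :=
  (mem_fixingSubgroup_iff _).mpr fun _ hz =>
    swap_apply_of_ne_of_ne (ne_of_mem_of_not_mem hz hx) (ne_of_mem_of_not_mem hz hy)

variable {S T : Finset α}

theorem exists_mem_fixingSubgroup_compl_eqOn [Fintype α] (hTS : T ⊆ S) {g : Perm α}
    (hg : Set.MapsTo g T S) : ∃ p ∈ fixingSubgroup (Perm α) (S : Set α)ᶜ, Set.EqOn p g T := by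
  obtain ⟨e, he⟩ := Set.MapsTo.exists_equiv_extend_of_card_eq (s := {x : S | ↑x ∈ T})
    (f := fun x => g x) (Fintype.card_coe S) (fun _ hx => hg hx)
    (fun _ _ _ _ h => Subtype.ext (g.injective h))
  refine ⟨ofSubtype (e : Perm S), (mem_fixingSubgroup_iff _).mpr fun _ hy =>
    ofSubtype_apply_of_not_mem _ hy, fun t ht => ?_⟩
  rw [ofSubtype_apply_of_mem _ (hTS ht)]
  exact he ⟨t, hTS ht⟩ ht

theorem exists_pair_notMem_mapsTo_of_not_mapsTo (hTS : #T < #S) {g : Perm α} {t : α}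
    (ht : t ∈ T) (hgt : g t ∉ S) : ∃ u v, u ≠ v ∧ u ∉ T ∧ v ∉ T ∧ g u ∈ S ∧ g v ∈ S := by
  set X := S.map g.symm.toEmbedding
  have hX : ∀ w ∈ X \ T.erase t, w ∉ T ∧ g w ∈ S := by
    intro w hw
    simp only [X, mem_sdiff, mem_map_equiv, symm_symm, mem_erase] at hw
    exact ⟨fun hwT => hw.2 ⟨fun hwt => hgt (hwt ▸ hw.1), hwT⟩, hw.1⟩
  have hcard : 1 < #(X \ T.erase t) := by
    have := le_card_sdiff (T.erase t) X
    rw [card_map, card_erase_of_mem ht] at this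
    have := card_pos.mpr ⟨t, ht⟩
    omega
  obtain ⟨u, hu, v, hv, huv⟩ := one_lt_card.mp hcard
  exact ⟨u, v, huv, (hX u hu).1, (hX v hv).1, (hX u hu).2, (hX v hv).2⟩

end PermCombinatorics

section Sandwich

variable {K : Type*} [Field K] [CharZero K] {α : Type*} [Fintype α] [DecidableEq α]
  {S T : Finset α} [DecidablePred (· ∈ fixingSubgroup (Perm α) (S : Set α)ᶜ)]
  [DecidablePred (· ∈ fixingSubgroup (Perm α) (T : Set α))]

theorem antisymmetrizer_mul_of_mul_symmetrizer_mem (hTS : T ⊂ S) (g : Perm α) :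
    antisymmetrizer K (fixingSubgroup (Perm α) (S : Set α)ᶜ) * of K (Perm α) g *
        symmetrizer K (fixingSubgroup (Perm α) (T : Set α)) ∈
      K ∙ (antisymmetrizer K (fixingSubgroup (Perm α) (S : Set α)ᶜ) *
        symmetrizer K (fixingSubgroup (Perm α) (T : Set α))) := by
  set a := antisymmetrizer K (fixingSubgroup (Perm α) (S : Set α)ᶜ)
  set b := symmetrizer K (fixingSubgroup (Perm α) (T : Set α))
  by_cases hg : Set.MapsTo g T S
  · obtain ⟨p, hp, hpg⟩ := exists_mem_fixingSubgroup_compl_eqOn hTS.subset hg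
    have hq : p⁻¹ * g ∈ fixingSubgroup (Perm α) (T : Set α) :=
      (mem_fixingSubgroup_iff _).mpr fun t ht => by
        simp [Perm.smul_def, ← hpg ht]
    rw [← mul_inv_cancel_left p g, map_mul, ← mul_assoc, antisymmetrizer_mul_of hp,
      smul_mul_assoc, smul_mul_assoc, mul_assoc, of_mul_symmetrizer hq]
    exact Submodule.smul_mem _ _ (Submodule.mem_span_singleton_self _)
  · obtain ⟨t, ht, hgt⟩ : ∃ t ∈ T, g t ∉ S := by simpa [Set.MapsTo] using hg
    obtain ⟨u, v, huv, hu, hv, hgu, hgv⟩ :=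
      exists_pair_notMem_mapsTo_of_not_mapsTo (card_lt_card hTS) ht hgt
    have hanti : a * of K _ g * b = -(a * of K _ g * b) :=
      calc a * of K _ g * b = a * of K _ (g * swap u v) * b := by
            rw [map_mul, ← mul_assoc a, mul_assoc (a * _),
              of_mul_symmetrizer (swap_mem_fixingSubgroup hu hv)]
        _ = a * of K _ (swap (g u) (g v)) * of K _ g * b := by
            rw [mul_swap_eq_swap_mul, map_mul]
            simp only [mul_assoc]
        _ = -(a * of K _ g * b) := by
            rw [antisymmetrizer_mul_of (swap_mem_fixingSubgroup (by simpa) (by simpa)),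
              sign_swap (g.injective.ne huv), Units.val_neg, Units.val_one, Int.cast_neg,
              Int.cast_one, neg_one_smul, neg_mul, neg_mul]
    have : IsAddTorsionFree (MonoidAlgebra K (Perm α)) := .of_isTorsionFree K _
    rw [self_eq_neg.mp hanti]
    exact Submodule.zero_mem _

theorem antisymmetrizer_mul_mul_symmetrizer_mem (hTS : T ⊂ S) (x : MonoidAlgebra K (Perm α)) :
    antisymmetrizer K (fixingSubgroup (Perm α) (S : Set α)ᶜ) * x *
        symmetrizer K (fixingSubgroup (Perm α) (T : Set α)) ∈
      K ∙ (antisymmetrizer K (fixingSubgroup (Perm α) (S : Set α)ᶜ) *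
        symmetrizer K (fixingSubgroup (Perm α) (T : Set α))) := by
  induction x using MonoidAlgebra.induction_on with
  | of g => exact antisymmetrizer_mul_of_mul_symmetrizer_mem hTS g
  | add x y hx hy => simpa only [mul_add, add_mul] using Submodule.add_mem _ hx hy
  | smul r x hx => simpa only [mul_smul_comm, smul_mul_assoc] using Submodule.smul_mem _ r hx

end Sandwich

theorem fixingSubgroup_compl_inf_fixingSubgroup_erase {α : Type*} [DecidableEq α]
    (S : Finset α) (z : α) :
    fixingSubgroup (Perm α) (S : Set α)ᶜ ⊓ fixingSubgroup (Perm α) (S.erase z : Set α) = ⊥ := by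
  rw [eq_bot_iff]
  intro σ hσ
  have hfix : ∀ x ≠ z, σ x = x := by
    intro x hxz
    by_cases hxS : x ∈ S
    · exact (mem_fixingSubgroup_iff _).mp (Subgroup.mem_inf.mp hσ).2 x (by simp [hxz, hxS])
    · exact (mem_fixingSubgroup_iff _).mp (Subgroup.mem_inf.mp hσ).1 x hxS
  have hz : σ z = z := by
    by_contra h
    exact h (σ.injective (hfix _ h))
  exact Subgroup.mem_bot.mpr (Equiv.ext fun x => if hxz : x = z then hxz ▸ hz else hfix x hxz)

theorem isSimpleModule_span_antisymmetrizer_mul_symmetrizer {K : Type*} [Field K] [CharZero K]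
    {α : Type*} [Fintype α] [DecidableEq α] {S : Finset α} {z : α} (hz : z ∈ S)
    [DecidablePred (· ∈ fixingSubgroup (Perm α) (S : Set α)ᶜ)]
    [DecidablePred (· ∈ fixingSubgroup (Perm α) (S.erase z : Set α))] :
    IsSimpleModule (MonoidAlgebra K (Perm α))
      (MonoidAlgebra K (Perm α) ∙ (antisymmetrizer K (fixingSubgroup (Perm α) (S : Set α)ᶜ) *
        symmetrizer K (fixingSubgroup (Perm α) (S.erase z : Set α)))) := by
  refine IsSemisimpleRing.isSimpleModule_span_singleton_of_mul_mul_mem (K := K) (fun h => ?_)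
    fun x => ?_
  · simpa [h] using coeff_antisymmetrizer_mul_symmetrizer_one (K := K)
      (fixingSubgroup_compl_inf_fixingSubgroup_erase S z)
  · have h := antisymmetrizer_mul_mul_symmetrizer_mem (erase_ssubset hz)
      (symmetrizer K (fixingSubgroup (Perm α) (S.erase z : Set α)) * x *
        antisymmetrizer K (fixingSubgroup (Perm α) (S : Set α)ᶜ))
    simp only [mul_assoc] at h ⊢
    exact h

section Hook

variable {n k : ℕ}

theorem hookA_eq_antisymmetrizer
    [DecidablePred (· ∈ fixingSubgroup (Perm (Fin n))
      (↑(univ.filter fun i : Fin n => (i : ℕ) < k) : Set (Fin n))ᶜ)] :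
    hookA n k = antisymmetrizer ℚ (fixingSubgroup (Perm (Fin n))
      (↑(univ.filter fun i : Fin n => (i : ℕ) < k) : Set (Fin n))ᶜ) := by
  refine Finset.sum_congr (Finset.filter_congr fun σ _ => ?_) fun _ _ => rfl
  simp [mem_fixingSubgroup_iff, Perm.smul_def]

theorem hookB_eq_symmetrizer (hn : 0 < n)
    [DecidablePred (· ∈ fixingSubgroup (Perm (Fin n))
      (↑((univ.filter fun i : Fin n => (i : ℕ) < k).erase ⟨0, hn⟩) : Set (Fin n)))] :
    hookB n k = symmetrizer ℚ (fixingSubgroup (Perm (Fin n))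
      (↑((univ.filter fun i : Fin n => (i : ℕ) < k).erase ⟨0, hn⟩) : Set (Fin n))) := by
  refine Finset.sum_congr (Finset.filter_congr fun σ _ => ?_) fun _ _ => rfl
  simp only [mem_fixingSubgroup_iff, Perm.smul_def, coe_erase, coe_filter, mem_univ, true_and,
    Set.mem_sdiff, Set.mem_ofPred_eq, Set.mem_singleton_iff, Fin.ext_iff, Nat.one_le_iff_ne_zero]
  exact forall_congr' fun i => ⟨fun h hi => h hi.2 hi.1, fun h hi0 hik => h ⟨hik, hi0⟩⟩

end Hook

/-- The left ideal `ℚ[Σₙ]·(a·b)` is a simple module over the group algebra `ℚ[Σₙ]`: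
it is the irreducible representation of hook type. -/
theorem hook_ideal_isSimpleModule (n k : ℕ) (hk : 2 ≤ k) (hn : k ≤ n) :
    IsSimpleModule (MonoidAlgebra ℚ (Equiv.Perm (Fin n)))
      ↥(Submodule.span (MonoidAlgebra ℚ (Equiv.Perm (Fin n))) {hookA n k * hookB n k}) := by
  classical
  have hn0 : 0 < n := by omega
  rw [hookA_eq_antisymmetrizer, hookB_eq_symmetrizer hn0]
  exact isSimpleModule_span_antisymmetrizer_mul_symmetrizer (by simp; omega)
end
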